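/- Let π = ⟨a, b, c ∣ a², abab⁻², acac⁻²⟩ and Π = ℤ[π]. The element θ = (a−1, −ba + a + b² − b, −ca + a + c² − c) ∈ Π³ lies in the kernel of the map ∂₂ : Π³ → Π³ given on standard basis vectors by ∂₂(1,0,0) = (a+1, 0, 0), ∂₂(0,1,0) = (b²a+1, a−b−1, 0), ∂₂(0,0,1) = (c²a+1, 0, a−c−1) (extended as a left-module map applied on the right, i.e., θ · M = 0 where M is the matrix with these rows). -/
import Mathlib


/-- The relators a², abab⁻², acac⁻² in the free group on three generators a, b, c. -/
def piRels : Set (FreeGroup (Fin 3)) :=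
  {(FreeGroup.of 0) ^ 2,
   FreeGroup.of 0 * FreeGroup.of 1 * FreeGroup.of 0 * (FreeGroup.of 1)⁻¹ * (FreeGroup.of 1)⁻¹,
   FreeGroup.of 0 * FreeGroup.of 2 * FreeGroup.of 0 * (FreeGroup.of 2)⁻¹ * (FreeGroup.of 2)⁻¹}

/-- π = ⟨a, b, c ∣ a², abab⁻², acac⁻²⟩. -/
abbrev piGroup := PresentedGroup piRels

/-- The integral group ring Π = ℤ[π]. -/
abbrev ZPi := MonoidAlgebra ℤ piGroup

/-- The canonical inclusion of group elements in the group ring. -/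
noncomputable def og (g : piGroup) : ZPi := MonoidAlgebra.of ℤ piGroup g

/-- a, b, c as elements of Π. -/
noncomputable def aa : ZPi := og (PresentedGroup.of 0)
noncomputable def bb : ZPi := og (PresentedGroup.of 1)
noncomputable def cc : ZPi := og (PresentedGroup.of 2)

/-- θ = (a−1, −ba + a + b² − b, −ca + a + c² − c) ∈ Π³. -/
noncomputable def theta : Fin 3 → ZPi :=
  ![aa - 1, -(bb * aa) + aa + bb ^ 2 - bb, -(cc * aa) + aa + cc ^ 2 - cc]

/-- The matrix of ∂₂, whose rows are ∂₂ of the standard basis vectors: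
(a+1, 0, 0), (b²a+1, a−b−1, 0) and (c²a+1, 0, a−c−1). -/
noncomputable def d2Matrix : Matrix (Fin 3) (Fin 3) ZPi :=
  !![aa + 1, 0, 0;
     bb ^ 2 * aa + 1, aa - bb - 1, 0;
     cc ^ 2 * aa + 1, 0, aa - cc - 1]

section Aux

private lemma rel_one' {r : FreeGroup (Fin 3)} (h : r ∈ piRels) : PresentedGroup.mk piRels r = 1 :=
  (QuotientGroup.eq_one_iff r).2 (Subgroup.subset_normalClosure h)

local notation "A" => (PresentedGroup.of 0 : piGroup)
local notation "B" => (PresentedGroup.of 1 : piGroup)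
local notation "C" => (PresentedGroup.of 2 : piGroup)

private lemma hA : A * A = 1 := by
  have := rel_one' (show (FreeGroup.of 0)^2 ∈ piRels by left; rfl)
  simpa [sq, PresentedGroup.of, map_mul] using this

private lemma conj_rel {i : Fin 3} {X : piGroup} (h : (PresentedGroup.mk piRels)
    (FreeGroup.of 0 * FreeGroup.of i * FreeGroup.of 0 * (FreeGroup.of i)⁻¹ * (FreeGroup.of i)⁻¹) = 1)
    (hX : X = PresentedGroup.of i) : A * X * A = X * X := by
  simp only [PresentedGroup.of, map_mul, map_inv] at hX h ⊢
  subst hX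
  rw [mul_inv_eq_one, mul_inv_eq_iff_eq_mul] at h
  simpa [PresentedGroup.of] using h

private lemma hABA : A * B * A = B * B :=
  conj_rel (rel_one' (by right; left; rfl)) rfl

private lemma hACA : A * C * A = C * C :=
  conj_rel (rel_one' (by right; right; rfl)) rfl

section
variable {X : piGroup} (hX : A * X * A = X * X)
include hX

private lemma gen_XA : X * A = A * (X * X) := by
  have := congrArg (A * ·) hX
  simpa [← mul_assoc, hA] using this

private lemma gen_X3 : X * (X * X) = 1 := by
  have h4 : (X * X) * (X * X) = X := by
    rw [← hX]
    calc A * X * A * (A * X * A) = A * X * (A * A) * X * A := by group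
    _ = A * (X * X) * A := by rw [hA]; group
    _ = A * (A * X * A) * A := by rw [hX]
    _ = (A * A) * X * (A * A) := by group
    _ = X := by rw [hA]; group
  have : X * (X * (X * X)) = X := by rw [show X * (X * (X*X)) = (X*X)*(X*X) by group, h4]
  exact mul_left_cancel (a := X) (by rw [this, mul_one])

end

private lemma hBA : B * A = A * (B * B) := gen_XA hABA
private lemma hB3 : B * (B * B) = 1 := gen_X3 hABA
private lemma hCA : C * A = A * (C * C) := gen_XA hACA
private lemma hC3 : C * (C * C) = 1 := gen_X3 hACA

private lemma og_mul (g h : piGroup) : og g * og h = og (g * h) :=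
  (map_mul (MonoidAlgebra.of ℤ piGroup) g h).symm
private lemma og_one : og 1 = 1 := map_one (MonoidAlgebra.of ℤ piGroup)

private lemma la : aa * aa = 1 := by rw [aa, og_mul, hA, og_one]
private lemma la' (x : ZPi) : aa * (aa * x) = x := by rw [← mul_assoc, la, one_mul]
private lemma lba : bb * aa = aa * (bb * bb) := by rw [aa, bb, og_mul, og_mul, og_mul, hBA]
private lemma lba' (x : ZPi) : bb * (aa * x) = aa * (bb * (bb * x)) := by
  rw [← mul_assoc, lba, mul_assoc, mul_assoc]
private lemma lb3 : bb * (bb * bb) = 1 := by rw [bb, og_mul, og_mul, hB3, og_one]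
private lemma lb3' (x : ZPi) : bb * (bb * (bb * x)) = x := by
  rw [show bb * (bb * (bb * x)) = (bb * (bb * bb)) * x by noncomm_ring, lb3, one_mul]
private lemma lca : cc * aa = aa * (cc * cc) := by rw [aa, cc, og_mul, og_mul, og_mul, hCA]
private lemma lca' (x : ZPi) : cc * (aa * x) = aa * (cc * (cc * x)) := by
  rw [← mul_assoc, lca, mul_assoc, mul_assoc]
private lemma lc3 : cc * (cc * cc) = 1 := by rw [cc, og_mul, og_mul, hC3, og_one]
private lemma lc3' (x : ZPi) : cc * (cc * (cc * x)) = x := by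
  rw [show cc * (cc * (cc * x)) = (cc * (cc * cc)) * x by noncomm_ring, lc3, one_mul]

private lemma col0 : (aa - 1) * (aa + 1) + (-(bb * aa) + aa + bb ^ 2 - bb) * (bb ^ 2 * aa + 1) +
      (-(cc * aa) + aa + cc ^ 2 - cc) * (cc ^ 2 * aa + 1) = 0 := by
  have e1 : (aa - 1) * (aa + 1) = aa*aa - 1 := by noncomm_ring
  rw [e1, la, sub_self, zero_add]
  have e2 : (-(bb * aa) + aa + bb ^ 2 - bb) * (bb ^ 2 * aa + 1)
      = -(bb * (aa * (bb * (bb * aa)))) + aa * (bb * (bb * aa)) + bb*(bb*(bb*(bb*aa))) - bb*(bb*(bb*aa))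
        + (-(bb * aa) + aa + bb*bb - bb) := by noncomm_ring
  have e3 : (-(cc * aa) + aa + cc ^ 2 - cc) * (cc ^ 2 * aa + 1)
      = -(cc * (aa * (cc * (cc * aa)))) + aa * (cc * (cc * aa)) + cc*(cc*(cc*(cc*aa))) - cc*(cc*(cc*aa))
        + (-(cc * aa) + aa + cc*cc - cc) := by noncomm_ring
  rw [e2, e3]
  simp only [lba', lb3', lca', lc3', la', lba, lca, la, lb3, lc3, mul_one]
  abel

private lemma col1 : (-(bb * aa) + aa + bb ^ 2 - bb) * (aa - bb - 1) = 0 := by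
  have e : (-(bb * aa) + aa + bb ^ 2 - bb) * (aa - bb - 1)
      = -(bb*(aa*aa)) + bb*(aa*bb) + bb*aa + aa*aa - aa*bb - aa + bb*(bb*aa) - bb*(bb*bb) - bb*bb
        - bb*aa + bb*bb + bb := by noncomm_ring
  rw [e]
  simp only [lba', lb3', lca', lc3', la', lba, lca, la, lb3, lc3, mul_one]
  abel

private lemma col2 : (-(cc * aa) + aa + cc ^ 2 - cc) * (aa - cc - 1) = 0 := by
  have e : (-(cc * aa) + aa + cc ^ 2 - cc) * (aa - cc - 1)
      = -(cc*(aa*aa)) + cc*(aa*cc) + cc*aa + aa*aa - aa*cc - aa + cc*(cc*aa) - cc*(cc*cc) - cc*cc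
        - cc*aa + cc*cc + cc := by noncomm_ring
  rw [e]
  simp only [lba', lb3', lca', lc3', la', lba, lca, la, lb3, lc3, mul_one]
  abel

end Aux

/-- θ lies in the kernel of ∂₂ : Π³ → Π³, i.e. θ · M = 0, where M is the matrix of ∂₂. -/

theorem theta_in_ker_d2 :
    (∀ j : Fin 3, ∑ i : Fin 3, theta i * d2Matrix i j = 0) := by
  intro j
  fin_cases j <;>
  · norm_num [theta, d2Matrix, Fin.sum_univ_three, Matrix.cons_val_zero, Matrix.cons_val_one,
      Matrix.head_cons, Matrix.cons_val_two, Matrix.tail_cons]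
    first
      | exact col0
      | exact col1
      | exact col2
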